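/- The overlap between the ideal output and the error vector satisfies |⟨cor, err⟩| ≤ √(1−p) / √m; consequently the final state fin = cor + err satisfies |⟨cor, fin⟩| ≥ 1 − √(1−p)/√m ≥ 1 − 1/√m. -/

import Mathlib

/-!
The sum over `j` in `err` runs over a full period of `ℤ/m`, so it does not depend on `j'`:
`err` is the pure tensor `(√2 √(1-p) / m) (∑ₖ vₖ) ⊗ s ⊗ |−⟩ ⊗ a₁`. Its overlap with the `a₀`-branch
of `cor` vanishes since `α^{⊗m} ⊥ vₖ`, while on the `a₁`-branch `⟨v₀, ∑ₖ vₖ⟩ = 1`, `⟨s, s⟩ = 1`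
and `⟨1|−⟩ = -1/√2`; hence `⟨cor, err⟩ = -(1-p)/m`. As `⟨cor, cor⟩ = 1`, also
`⟨cor, fin⟩ = 1 - (1-p)/m`, and `(1-p)/m = t² ≤ t ≤ 1/√m` for `t = √(1-p)/√m ≤ 1`.
-/

open Finset

section Tensors

variable {𝕜 : Type*} [CommSemiring 𝕜] [StarRing 𝕜]

def pureTensor {ι κ μ : Type*} (F : ι → 𝕜) (G : κ → 𝕜) (H : μ → 𝕜) : ι × κ × μ → 𝕜 :=
  fun q => F q.1 * G q.2.1 * H q.2.2

lemma star_pureTensor_dotProduct_pureTensor {ι κ μ : Type*} [Fintype ι] [Fintype κ] [Fintype μ]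
    (F F' : ι → 𝕜) (G G' : κ → 𝕜) (H H' : μ → 𝕜) :
    star (pureTensor F G H) ⬝ᵥ pureTensor F' G' H'
      = (star F ⬝ᵥ F') * (star G ⬝ᵥ G') * (star H ⬝ᵥ H') := by
  simp only [dotProduct, pureTensor, Pi.star_apply, Fintype.sum_prod_type, sum_mul_sum]
  simp_rw [sum_mul, star_mul']
  refine sum_congr rfl fun _ _ => ?_
  rw [sum_comm]
  exact sum_congr rfl fun _ _ => sum_congr rfl fun _ _ => by ring

variable {ι κ : Type*} [Fintype ι] [DecidableEq ι] [Fintype κ]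

def prodState (u : ι → κ → 𝕜) : (ι → κ) → 𝕜 := fun f => ∏ i, u i (f i)

def excitedState (α αp : κ → 𝕜) (k : ι) : (ι → κ) → 𝕜 :=
  prodState fun i => if i = k then αp else α

lemma star_prodState_dotProduct_prodState (u w : ι → κ → 𝕜) :
    star (prodState u) ⬝ᵥ prodState w = ∏ i, star (u i) ⬝ᵥ w i := by
  simp only [dotProduct, prodState, Pi.star_apply, star_prod, ← prod_mul_distrib]
  exact (Fintype.prod_sum fun i x => star (u i x) * w i x).symm

variable {α αp : κ → 𝕜}

lemma star_prodState_dotProduct_self_const (hα : star α ⬝ᵥ α = 1) :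
    star (prodState fun _ : ι => α) ⬝ᵥ prodState (fun _ : ι => α) = 1 := by
  rw [star_prodState_dotProduct_prodState, hα, prod_const_one]

lemma star_excitedState_dotProduct_excitedState (hα : star α ⬝ᵥ α = 1)
    (hαp : star αp ⬝ᵥ αp = 1) (horth : star α ⬝ᵥ αp = 0) (k k' : ι) :
    star (excitedState α αp k) ⬝ᵥ excitedState α αp k' = if k = k' then 1 else 0 := by
  rw [excitedState, excitedState, star_prodState_dotProduct_prodState]
  split_ifs with hkk
  · subst hkk
    exact prod_eq_one fun i _ => by split_ifs <;> assumption
  · refine prod_eq_zero (mem_univ k) ?_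
    rw [if_pos rfl, if_neg hkk, Matrix.star_dotProduct, horth, star_zero]

lemma star_prodState_dotProduct_excitedState (horth : star α ⬝ᵥ αp = 0) (k : ι) :
    star (prodState fun _ : ι => α) ⬝ᵥ excitedState α αp k = 0 := by
  rw [excitedState, star_prodState_dotProduct_prodState]
  exact prod_eq_zero (mem_univ k) (by rw [if_pos rfl, horth])

lemma star_excitedState_dotProduct_sum (hα : star α ⬝ᵥ α = 1)
    (hαp : star αp ⬝ᵥ αp = 1) (horth : star α ⬝ᵥ αp = 0) (k : ι) :
    star (excitedState α αp k) ⬝ᵥ ∑ k', excitedState α αp k' = 1 := by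
  simp [dotProduct_sum, star_excitedState_dotProduct_excitedState hα hαp horth]

lemma star_prodState_dotProduct_sum_excitedState (horth : star α ⬝ᵥ αp = 0) :
    star (prodState fun _ : ι => α) ⬝ᵥ ∑ k, excitedState α αp k = 0 := by
  simp [dotProduct_sum, star_prodState_dotProduct_excitedState horth]

end Tensors

lemma sum_sum_sub_mul_ite_eq {R G : Type*} [NonAssocSemiring R] [AddGroup G]
    [Fintype G] [DecidableEq G] (g : G → R) (x : G) :
    ∑ j, ∑ j', g (j - j') * (if x = j' then 1 else 0) = ∑ k, g k := by
  simp only [mul_ite, mul_one, mul_zero, Fintype.sum_ite_eq]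
  exact (Equiv.subRight x).sum_comp g

lemma mul_sum_sub_mul_ite_mul_eq_pureTensor {ι κ : Type*} {m : ℕ} [NeZero m] (c : ℂ)
    (v : Fin m → ι → ℂ) (μ : κ → ℂ) (q : ι × Fin m × κ) :
    c * (∑ j, ∑ j', v (j - j') q.1 * (if q.2.1 = j' then 1 else 0)) * μ q.2.2
      = pureTensor ((c * √(m : ℝ)) • ∑ k, v k) (fun _ => ((√(m : ℝ) : ℝ) : ℂ)⁻¹) μ q := by
  have hm : (√(m : ℝ) : ℂ) ≠ 0 := by
    exact_mod_cast (Real.sqrt_pos.2 (by exact_mod_cast (NeZero.pos m) : (0 : ℝ) < m)).ne'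
  rw [sum_sum_sub_mul_ite_eq (fun k => v k q.1)]
  simp only [pureTensor, Finset.sum_apply, Pi.smul_apply, smul_eq_mul]
  field_simp

lemma star_const_inv_sqrt_card_dotProduct_self (ι : Type*) [Fintype ι] [Nonempty ι] :
    star (fun _ : ι => ((√(Fintype.card ι : ℝ) : ℝ) : ℂ)⁻¹)
      ⬝ᵥ (fun _ => ((√(Fintype.card ι : ℝ) : ℝ) : ℂ)⁻¹) = 1 := by
  have hcard : (0 : ℝ) < Fintype.card ι := by exact_mod_cast Fintype.card_pos
  simp only [dotProduct, Pi.star_apply, star_inv₀, Complex.star_def, Complex.conj_ofReal,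
    sum_const, card_univ, nsmul_eq_mul, ← mul_inv, ← Complex.ofReal_mul,
    Real.mul_self_sqrt hcard.le]
  push_cast
  exact mul_inv_cancel₀ (by exact_mod_cast hcard.ne')

section Branches

variable {𝕜 E ι : Type*} [RCLike 𝕜] [NormedAddCommGroup E] [InnerProductSpace 𝕜 E] [Fintype ι]

lemma sum_inner_smul_smul (x y : ι → 𝕜) (a b : E) :
    ∑ q, inner 𝕜 (x q • a) (y q • b) = (star x ⬝ᵥ y) * inner 𝕜 a b := by
  simp only [inner_smul_left, inner_smul_right, dotProduct, sum_mul, Pi.star_apply,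
    RCLike.star_def]
  exact sum_congr rfl fun _ _ => by ring

lemma sum_inner_add_smul_smul (x₀ x₁ y : ι → 𝕜) (a₀ a₁ : E) (h : star x₀ ⬝ᵥ y = 0) :
    ∑ q, inner 𝕜 (x₀ q • a₀ + x₁ q • a₁) (y q • a₁) = (star x₁ ⬝ᵥ y) * inner 𝕜 a₁ a₁ := by
  simp only [inner_add_left, sum_add_distrib, sum_inner_smul_smul, h, zero_mul, zero_add]

lemma sum_inner_add_smul_self (x₀ x₁ : ι → 𝕜) (a₀ a₁ : E) (h : star x₀ ⬝ᵥ x₁ = 0) :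
    ∑ q, inner 𝕜 (x₀ q • a₀ + x₁ q • a₁) (x₀ q • a₀ + x₁ q • a₁)
      = (star x₀ ⬝ᵥ x₀) * inner 𝕜 a₀ a₀ + (star x₁ ⬝ᵥ x₁) * inner 𝕜 a₁ a₁ := by
  have h' : star x₁ ⬝ᵥ x₀ = 0 := by rw [Matrix.star_dotProduct, h, star_zero]
  simp only [inner_add_left, inner_add_right, sum_add_distrib, sum_inner_smul_smul, h, h',
    zero_mul, add_zero, zero_add]

end Branches

lemma div_le_sqrt_div_sqrt {x y : ℝ} (hx0 : 0 ≤ x) (hx1 : x ≤ 1) (hy : 1 ≤ y) :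
    x / y ≤ √x / √y := by
  have hxy : √x / √y ≤ 1 :=
    div_le_one_of_le₀ ((Real.sqrt_le_one.2 hx1).trans (Real.one_le_sqrt.2 hy)) (Real.sqrt_nonneg y)
  calc x / y = (√x / √y) ^ 2 := by
        rw [div_pow, Real.sq_sqrt hx0, Real.sq_sqrt (zero_le_one.trans hy)]
    _ ≤ √x / √y := sq_le (by positivity) hxy

lemma sqrt_div_sqrt_le_inv_sqrt {x : ℝ} (hx1 : x ≤ 1) (y : ℝ) : √x / √y ≤ (√y)⁻¹ := by
  rw [← one_div]
  exact div_le_div_of_nonneg_right (Real.sqrt_le_one.2 hx1) (Real.sqrt_nonneg y)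

lemma norm_ofReal_neg_div_bounds {x y : ℝ} (hx0 : 0 ≤ x) (hx1 : x ≤ 1) (hy : 1 ≤ y) :
    ‖((-(x / y) : ℝ) : ℂ)‖ ≤ √x / √y
      ∧ 1 - √x / √y ≤ ‖1 + ((-(x / y) : ℝ) : ℂ)‖
      ∧ 1 - (√y)⁻¹ ≤ ‖1 + ((-(x / y) : ℝ) : ℂ)‖ := by
  have hle := div_le_sqrt_div_sqrt hx0 hx1 hy
  have hle' := sqrt_div_sqrt_le_inv_sqrt hx1 y
  have hxy0 : 0 ≤ x / y := div_nonneg hx0 (by linarith)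
  have hxy1 : x / y ≤ 1 := div_le_one_of_le₀ (by linarith) (by linarith)
  rw [← Complex.ofReal_one, ← Complex.ofReal_add, Complex.norm_real, Complex.norm_real,
    norm_neg, Real.norm_of_nonneg hxy0, Real.norm_of_nonneg (by linarith : (0 : ℝ) ≤ 1 + _)]
  exact ⟨hle, by linarith, by linarith⟩

/-- The space `R ⊗ (ℂ^d)^{⊗m} ⊗ ℂ^m ⊗ ℂ²` is modelled as the `L²`-space of `R`-valued functions
on `(Fin m → Fin d) × Fin m × Fin 2`. -/
theorem stmt_9 (m d : ℕ) (hm : 1 ≤ m)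
    (R : Type*) [NormedAddCommGroup R] [InnerProductSpace ℂ R]
    (a₀ a₁ : R) (ha₀ : ‖a₀‖ = 1) (ha₁ : ‖a₁‖ = 1)
    (p : ℝ) (hp0 : 0 ≤ p) (hp1 : p ≤ 1)
    (α αp : Fin d → ℂ)
    (hα : ∑ i, star (α i) * α i = 1) (hαp : ∑ i, star (αp i) * αp i = 1)
    (horth : ∑ i, star (α i) * αp i = 0)
    (s : Fin m → ℂ) (hs : s = fun _ => (Real.sqrt m : ℂ)⁻¹)
    (ket0 ket1 minus : Fin 2 → ℂ)
    (hket0 : ket0 = fun b => if b = 0 then 1 else 0)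
    (hket1 : ket1 = fun b => if b = 1 then 1 else 0)
    (hminus : minus = fun b => (ket0 b - ket1 b) * (Real.sqrt 2 : ℂ)⁻¹)
    (αm : (Fin m → Fin d) → ℂ) (hαm : αm = fun f => ∏ i, α (f i))
    (v : Fin m → (Fin m → Fin d) → ℂ)
    (hv : v = fun k f => ∏ i, (if i = k then αp (f i) else α (f i)))
    (cor err : (Fin m → Fin d) × Fin m × Fin 2 → R)
    (hcor : cor = fun q =>
        ((Real.sqrt p : ℂ) * αm q.1 * s q.2.1 * ket0 q.2.2) • a₀
        + ((Real.sqrt (1 - p) : ℂ) * v ⟨0, by omega⟩ q.1 * s q.2.1 * ket1 q.2.2) • a₁)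
    (herr : err = fun q =>
        (((Real.sqrt 2 / Real.sqrt m ^ 3) * Real.sqrt (1 - p) : ℂ)
            * (∑ j : Fin m, ∑ j' : Fin m,
                v (j - j') q.1 * (if q.2.1 = j' then 1 else 0))
            * minus q.2.2) • a₁) :
    ‖(inner ℂ ((WithLp.equiv 2 ((Fin m → Fin d) × Fin m × Fin 2 → R)).symm cor)
          ((WithLp.equiv 2 ((Fin m → Fin d) × Fin m × Fin 2 → R)).symm err) : ℂ)‖
        ≤ Real.sqrt (1 - p) / Real.sqrt m
    ∧ 1 - Real.sqrt (1 - p) / Real.sqrt m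
        ≤ ‖
            (inner ℂ ((WithLp.equiv 2 ((Fin m → Fin d) × Fin m × Fin 2 → R)).symm cor)
              ((WithLp.equiv 2 ((Fin m → Fin d) × Fin m × Fin 2 → R)).symm cor
                + (WithLp.equiv 2 ((Fin m → Fin d) × Fin m × Fin 2 → R)).symm err) : ℂ)‖
    ∧ 1 - (Real.sqrt m)⁻¹
        ≤ ‖
            (inner ℂ ((WithLp.equiv 2 ((Fin m → Fin d) × Fin m × Fin 2 → R)).symm cor)
              ((WithLp.equiv 2 ((Fin m → Fin d) × Fin m × Fin 2 → R)).symm cor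
                + (WithLp.equiv 2 ((Fin m → Fin d) × Fin m × Fin 2 → R)).symm err) : ℂ)‖ := by
  have hm0 : NeZero m := ⟨by omega⟩
  obtain ⟨hk00, hk11, hk01, hk1m⟩ : star ket0 ⬝ᵥ ket0 = 1 ∧ star ket1 ⬝ᵥ ket1 = 1
      ∧ star ket0 ⬝ᵥ ket1 = 0 ∧ star ket1 ⬝ᵥ minus = -(√2 : ℂ)⁻¹ := by
    subst hket0 hket1 hminus; simp [dotProduct]
  have hv' : v = excitedState α αp := by
    subst hv; funext k f; simp only [excitedState, prodState, ite_apply]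
  have hcor' : cor = fun q => pureTensor ((√p : ℂ) • prodState fun _ => α) s ket0 q • a₀
      + pureTensor ((√(1 - p) : ℂ) • excitedState α αp ⟨0, by omega⟩) s ket1 q • a₁ := by
    rw [hcor, hαm, hv']; rfl
  have herr' : err = fun q => pureTensor ((√2 / √(m : ℝ) ^ 3 * √(1 - p) * √(m : ℝ) : ℂ)
      • ∑ k, excitedState α αp k) s minus q • a₁ := by
    rw [herr, hs, ← hv']; funext q; rw [mul_sum_sub_mul_ite_mul_eq_pureTensor]
  have hss : star s ⬝ᵥ s = 1 := by
    subst hs; simpa using star_const_inv_sqrt_card_dotProduct_self (Fin m)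
  set toL2 := (WithLp.equiv 2 ((Fin m → Fin d) × Fin m × Fin 2 → R)).symm
  have hce : inner ℂ (toL2 cor) (toL2 err) = ((-((1 - p) / m) : ℝ) : ℂ) := by
    simp only [toL2, PiLp.inner_apply, WithLp.equiv_symm_apply, hcor', herr']
    rw [sum_inner_add_smul_smul _ _ _ _ _ (by simp [star_pureTensor_dotProduct_pureTensor,
      star_prodState_dotProduct_sum_excitedState horth])]
    simp only [Fin.mk_zero', Complex.coe_smul, star_pureTensor_dotProduct_pureTensor, star_smul,
      star_trivial, dotProduct_smul, smul_dotProduct, star_excitedState_dotProduct_sum hα hαp horth,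
      Complex.real_smul, mul_one, smul_eq_mul, hss, hk1m, mul_neg, inner_self_eq_norm_sq_to_K, ha₁,
      Complex.coe_algebraMap, Complex.ofReal_one, one_pow, Complex.ofReal_neg, Complex.ofReal_div,
      Complex.ofReal_sub, Complex.ofReal_natCast, neg_inj]
    have hm_sqrt : √(m : ℝ) ≠ 0 := (Real.sqrt_pos.2 (by exact_mod_cast hm0.pos)).ne'
    norm_cast
    rw [pow_succ, Real.sq_sqrt (Nat.cast_nonneg m)]
    field_simp
    rw [Real.sq_sqrt (by linarith)]
  have hcc : inner ℂ (toL2 cor) (toL2 cor) = (1 : ℂ) := by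
    simp only [toL2, PiLp.inner_apply, WithLp.equiv_symm_apply, hcor']
    rw [sum_inner_add_smul_self _ _ _ _ (by simp [star_pureTensor_dotProduct_pureTensor, hk01])]
    simp only [Complex.coe_smul, star_pureTensor_dotProduct_pureTensor, star_smul, star_trivial,
      dotProduct_smul, smul_dotProduct, star_prodState_dotProduct_self_const hα, Complex.real_smul,
      mul_one, hss, hk00, hk11, inner_self_eq_norm_sq_to_K, ha₀, ha₁, Complex.coe_algebraMap,
      Complex.ofReal_one, one_pow, Fin.mk_zero', if_true,
      star_excitedState_dotProduct_excitedState hα hαp horth]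
    norm_cast
    rw [Real.mul_self_sqrt hp0, Real.mul_self_sqrt (by linarith), add_sub_cancel]
  rw [inner_add_right, hce, hcc]
  exact norm_ofReal_neg_div_bounds (by linarith) (by linarith) (by exact_mod_cast hm)
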